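/- Let n ≥ 1 and let S = {A_1, …, A_k} be a Sperner family on {1,…,n} with k ≥ 2, |A_j| ≥ 2 for every j = 1, …, k, and ⋂_{j=1}^k A_j = ∅, and let ω ∈ (0,1) be the unique fixed point of the module h_S in (0,1). Then the iterates h_S^{(N)} (the N-fold composition of h_S with itself) satisfy: lim_{N→∞} h_S^{(N)}(t) = 0 for every t ∈ [0, ω); h_S^{(N)}(ω) = ω for every N; and lim_{N→∞} h_S^{(N)}(t) = 1 for every t ∈ (ω, 1]. -/

import Mathlib

open MeasureTheory

/-- The Sperner statistic of a family `S` of subsets of `{1,…,n}`: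
`H_S(x) = max_{A ∈ S} min_{i ∈ A} x_i`. -/
noncomputable def spernerStat {n : ℕ} (S : Finset (Finset (Fin n))) (hS : S.Nonempty)
    (hne : ∀ A ∈ S, A.Nonempty) (x : Fin n → ℝ) : ℝ :=
  S.attach.sup' (Finset.attach_nonempty_iff.mpr hS)
    (fun A => A.1.inf' (hne A.1 A.2) x)

/- The module of a Sperner family:
`h_S(t) = Σ_{ε ∈ {0,1}^n, H_S(ε)=0} t^{z(ε)} (1−t)^{n−z(ε)}`, where `z(ε)` is the
number of zero coordinates of `ε`. -/
open scoped Classical in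
noncomputable def spernerModule {n : ℕ} (S : Finset (Finset (Fin n))) (hS : S.Nonempty)
    (hne : ∀ A ∈ S, A.Nonempty) (t : ℝ) : ℝ :=
  ∑ ε : Fin n → Bool,
    if spernerStat S hS hne (fun i => if ε i then 1 else 0) = 0 then
      t ^ (Finset.univ.filter fun i => ε i = false).card *
        (1 - t) ^ (n - (Finset.univ.filter fun i => ε i = false).card)
    else 0

/-! `h_S(t)` is the probability that `H_S(ε) = 0` when the coordinates of `ε` are independent and
each vanishes with probability `t`. Since the members of `S` have empty intersection, a zero of
`H_S` has at least two zero coordinates, so `h_S(t) ≤ 2ⁿ t²`; since they have at least two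
elements, a non-zero of `H_S` has at least two unit coordinates, so `1 - h_S(t) ≤ 2ⁿ (1 - t)²`.
Hence `h_S(t) < t` near `0` and `h_S(t) > t` near `1`, and as `ω` is the only fixed point in
`(0, 1)`, the intermediate value theorem gives `h_S < id` on `(0, ω)` and `h_S > id` on `(ω, 1)`.
An orbit starting below (above) `ω` is therefore monotone and bounded, and its limit is a fixed
point of the continuous map `h_S`, which can only be `0` (resp. `1`). -/

section Dynamics

open Set Filter Topology

theorem tendsto_iterate_of_forall_lt_self {α : Type*} [ConditionallyCompleteLinearOrder α]
    [TopologicalSpace α] [OrderTopology α] {f : α → α} {a b t : α} (hf : Continuous f)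
    (ha : f a = a) (hlt : ∀ x ∈ Ioo a b, f x ∈ Ico a x) (ht : t ∈ Ico a b) :
    Tendsto (fun N => f^[N] t) atTop (𝓝 a) := by
  have hstep : ∀ x ∈ Ico a b, f x ∈ Ico a b ∧ f x ≤ x := by
    rintro x ⟨hax, hxb⟩
    rcases hax.eq_or_lt with rfl | hax
    · rw [ha]
      exact ⟨⟨le_rfl, hxb⟩, le_rfl⟩
    · obtain ⟨hafx, hfxx⟩ := hlt x ⟨hax, hxb⟩
      exact ⟨⟨hafx, hfxx.trans hxb⟩, hfxx.le⟩
  have hmem : ∀ N, f^[N] t ∈ Ico a b :=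
    fun N => MapsTo.iterate (fun x hx => (hstep x hx).1) N ht
  have hanti : Antitone fun N => f^[N] t := antitone_nat_of_succ_le fun N => by
    rw [Function.iterate_succ_apply']
    exact (hstep _ (hmem N)).2
  have hbdd : BddBelow (range fun N => f^[N] t) := ⟨a, by rintro _ ⟨N, rfl⟩; exact (hmem N).1⟩
  have hlim := tendsto_atTop_ciInf hanti hbdd
  have hfix : f (⨅ N, f^[N] t) = ⨅ N, f^[N] t := isFixedPt_of_tendsto_iterate hlim hf.continuousAt
  have hle : a ≤ ⨅ N, f^[N] t := le_ciInf fun N => (hmem N).1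
  rcases hle.eq_or_lt with hL | hL
  · rwa [← hL] at hlim
  · have hLb : ⨅ N, f^[N] t < b := (ciInf_le hbdd 0).trans_lt ht.2
    exact absurd hfix (hlt _ ⟨hL, hLb⟩).2.ne

theorem tendsto_iterate_of_forall_self_lt {α : Type*} [ConditionallyCompleteLinearOrder α]
    [TopologicalSpace α] [OrderTopology α] {f : α → α} {a b t : α} (hf : Continuous f)
    (hb : f b = b) (hlt : ∀ x ∈ Ioo a b, f x ∈ Ioc x b) (ht : t ∈ Ioc a b) :
    Tendsto (fun N => f^[N] t) atTop (𝓝 b) :=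
  tendsto_iterate_of_forall_lt_self (α := αᵒᵈ) hf hb
    (fun x hx => (hlt x ⟨hx.2, hx.1⟩).symm) ⟨ht.2, ht.1⟩

theorem lt_self_of_isPreconnected {f : ℝ → ℝ} {s : Set ℝ} (hs : IsPreconnected s)
    (hf : ContinuousOn f s) (hfix : ∀ x ∈ s, f x ≠ x) {x₀ x : ℝ} (hx₀ : x₀ ∈ s) (hx : x ∈ s)
    (hlt : f x₀ < x₀) : f x < x := by
  by_contra! hge
  obtain ⟨c, hc, hc0⟩ := hs.intermediate_value hx₀ hx (hf.sub continuousOn_id)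
    ⟨(sub_neg.2 hlt).le, sub_nonneg.2 hge⟩
  exact hfix c hc (sub_eq_zero.1 hc0)

theorem exists_lt_self_of_le_mul_sq {f : ℝ → ℝ} {C δ : ℝ} (hδ : 0 < δ)
    (hf : ∀ x ∈ Ioo 0 δ, f x ≤ C * x ^ 2) : ∃ x ∈ Ioo 0 δ, f x < x := by
  have hC : ∀ᶠ x in 𝓝[>] 0, C * x < 1 := by
    refine nhdsWithin_le_nhds (Tendsto.eventually_lt_const zero_lt_one ?_)
    simpa using (continuous_const_mul C).tendsto 0
  have hev : ∀ᶠ x in 𝓝[>] (0 : ℝ), x ∈ Ioo 0 δ ∧ f x < x := by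
    filter_upwards [Ioo_mem_nhdsGT hδ, hC] with x hx hCx
    refine ⟨hx, (hf x hx).trans_lt ?_⟩
    nlinarith [hx.1]
  exact hev.exists.imp fun x hx => hx

theorem forall_lt_self_of_le_mul_sq {f : ℝ → ℝ} {C δ : ℝ} (hf : ContinuousOn f (Ioo 0 δ))
    (hfix : ∀ x ∈ Ioo 0 δ, f x ≠ x) (hle : ∀ x ∈ Ioo 0 δ, f x ≤ C * x ^ 2) :
    ∀ x ∈ Ioo 0 δ, f x < x := fun x hx => by
  obtain ⟨x₀, hx₀, hlt⟩ := exists_lt_self_of_le_mul_sq (hx.1.trans hx.2) hle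
  exact lt_self_of_isPreconnected isPreconnected_Ioo hf hfix hx₀ hx hlt

theorem forall_self_lt_of_one_sub_le_mul_sq {f : ℝ → ℝ} {C δ : ℝ}
    (hf : ContinuousOn f (Ioo δ 1)) (hfix : ∀ x ∈ Ioo δ 1, f x ≠ x)
    (hle : ∀ x ∈ Ioo δ 1, 1 - f x ≤ C * (1 - x) ^ 2) : ∀ x ∈ Ioo δ 1, x < f x := by
  have hrefl : ∀ y ∈ Ioo 0 (1 - δ), 1 - y ∈ Ioo δ 1 := fun y hy =>
    ⟨by linarith [hy.2], by linarith [hy.1]⟩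
  have hlt := forall_lt_self_of_le_mul_sq (f := fun y => 1 - f (1 - y)) (C := C)
    (continuousOn_const.sub (hf.comp (continuousOn_const.sub continuousOn_id) hrefl))
    (fun y hy hy' => hfix _ (hrefl y hy) (by linarith))
    (fun y hy => by simpa using hle _ (hrefl y hy))
  intro x hx
  have hx' := hlt (1 - x) ⟨by linarith [hx.2], by linarith [hx.1]⟩
  simp only [sub_sub_cancel] at hx'
  linarith

end Dynamics

section SpernerModule

open Finset

theorem pow_mul_pow_le_sq {p q : ℝ} {k m : ℕ} (hp₀ : 0 ≤ p) (hp₁ : p ≤ 1) (hq₀ : 0 ≤ q)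
    (hq₁ : q ≤ 1) (hk : 2 ≤ k) : p ^ k * q ^ m ≤ p ^ 2 :=
  calc p ^ k * q ^ m ≤ p ^ k * 1 := by gcongr; exact pow_le_one₀ hq₀ hq₁
    _ ≤ p ^ 2 := by rw [mul_one]; exact pow_le_pow_of_le_one hp₀ hp₁ hk

theorem sum_pow_mul_one_sub_pow_eq_one {n : ℕ} (t : ℝ) :
    ∑ ε : Fin n → Bool, t ^ #{i | ε i = false} * (1 - t) ^ (n - #{i | ε i = false}) = 1 := by
  have hprod : ∀ ε : Fin n → Bool, t ^ #{i | ε i = false} * (1 - t) ^ (n - #{i | ε i = false})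
      = ∏ i, if ε i then 1 - t else t := by
    intro ε
    have hcard := card_filter_add_card_filter_not (s := univ) (fun i => ε i = false)
    simp only [Bool.not_eq_false, card_univ, Fintype.card_fin] at hcard
    rw [prod_ite, prod_const, prod_const, show n - #{i | ε i = false} = #{i | ε i = true} by omega]
    simp only [Bool.not_eq_true]
    ring
  simp_rw [hprod]
  exact (Fintype.prod_sum fun (_ : Fin n) (b : Bool) => if b then 1 - t else t).symm.trans
    (by simp)

variable {n : ℕ} {S : Finset (Finset (Fin n))} {hS : S.Nonempty} {hne : ∀ A ∈ S, A.Nonempty}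

theorem spernerStat_indicator_eq_zero_iff (ε : Fin n → Bool) :
    spernerStat S hS hne (fun i => if ε i then 1 else 0) = 0 ↔ ∀ A ∈ S, ∃ i ∈ A, ε i = false := by
  have hnonneg : 0 ≤ spernerStat S hS hne (fun i => if ε i then 1 else 0) := by
    obtain ⟨A, hA⟩ := hS
    refine le_trans ?_ (le_sup' _ (mem_attach _ ⟨A, hA⟩))
    exact le_inf' _ _ fun i _ => by split_ifs <;> norm_num
  rw [← hnonneg.ge_iff_eq']
  simp only [spernerStat, sup'_le_iff, inf'_le_iff, mem_attach, forall_const, Subtype.forall]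
  refine forall₂_congr fun A _ => exists_congr fun i => and_congr_right fun _ => ?_
  cases ε i <;> simp

theorem two_le_card_filter_false (hint : S.inf' hS id = ∅) {ε : Fin n → Bool}
    (hε : ∀ A ∈ S, ∃ i ∈ A, ε i = false) : 2 ≤ #{i | ε i = false} := by
  by_contra! hlt
  obtain ⟨A₀, hA₀⟩ := id hS
  obtain ⟨i₀, -, hi₀⟩ := hε A₀ hA₀
  have hmem : i₀ ∈ S.inf' hS id := (mem_inf' hS).2 fun A hA => by
    obtain ⟨i, hiA, hi⟩ := hε A hA
    rwa [(card_le_one (s := {i | ε i = false})).1 (by omega) i (by simpa) i₀ (by simpa)] at hiA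
  rw [hint] at hmem
  exact notMem_empty _ hmem

theorem two_le_sub_card_filter_false (hcard : ∀ A ∈ S, 2 ≤ #A) {ε : Fin n → Bool}
    (hε : ¬ ∀ A ∈ S, ∃ i ∈ A, ε i = false) : 2 ≤ n - #{i | ε i = false} := by
  obtain ⟨A, hA, hAε⟩ : ∃ A ∈ S, ∀ i ∈ A, ε i = true := by simpa using hε
  have hsub : A ⊆ ({i | ε i = true} : Finset (Fin n)) := fun i hi => by simpa using hAε i hi
  have hsplit := card_filter_add_card_filter_not (s := univ) (fun i => ε i = false)
  simp only [Bool.not_eq_false, card_univ, Fintype.card_fin] at hsplit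
  have hAcard := hcard A hA
  have hle := card_le_card hsub
  omega

variable (S hS hne)

theorem continuous_spernerModule : Continuous (spernerModule S hS hne) :=
  continuous_finsetSum _ fun ε _ => by split_ifs <;> fun_prop

theorem spernerModule_nonneg {t : ℝ} (ht₀ : 0 ≤ t) (ht₁ : t ≤ 1) :
    0 ≤ spernerModule S hS hne t :=
  sum_nonneg fun ε _ => by split_ifs <;> positivity

theorem spernerModule_le_one {t : ℝ} (ht₀ : 0 ≤ t) (ht₁ : t ≤ 1) :
    spernerModule S hS hne t ≤ 1 :=
  (sum_le_sum fun ε _ => by split_ifs <;> [exact le_rfl; positivity]).trans_eq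
    (sum_pow_mul_one_sub_pow_eq_one t)

theorem spernerModule_le_two_pow_mul_sq (hint : S.inf' hS id = ∅) {t : ℝ} (ht₀ : 0 ≤ t)
    (ht₁ : t ≤ 1) : spernerModule S hS hne t ≤ 2 ^ n * t ^ 2 := by
  calc spernerModule S hS hne t ≤ ∑ _ε : Fin n → Bool, t ^ 2 := sum_le_sum fun ε _ => ?_
    _ = 2 ^ n * t ^ 2 := by simp
  split_ifs with hε
  · exact pow_mul_pow_le_sq ht₀ ht₁ (sub_nonneg.2 ht₁) (by linarith)
      (two_le_card_filter_false hint ((spernerStat_indicator_eq_zero_iff ε).1 hε))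
  · positivity

theorem one_sub_spernerModule_le_two_pow_mul_sq (hcard : ∀ A ∈ S, 2 ≤ #A) {t : ℝ}
    (ht₀ : 0 ≤ t) (ht₁ : t ≤ 1) : 1 - spernerModule S hS hne t ≤ 2 ^ n * (1 - t) ^ 2 := by
  conv_lhs => rw [← sum_pow_mul_one_sub_pow_eq_one (n := n) t, spernerModule, ← sum_sub_distrib]
  calc _ ≤ ∑ _ε : Fin n → Bool, (1 - t) ^ 2 := sum_le_sum fun ε _ => ?_
    _ = 2 ^ n * (1 - t) ^ 2 := by simp
  split_ifs with hε
  · rw [sub_self]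
    positivity
  · rw [sub_zero, mul_comm]
    exact pow_mul_pow_le_sq (sub_nonneg.2 ht₁) (by linarith) ht₀ ht₁
      (two_le_sub_card_filter_false hcard (mt (spernerStat_indicator_eq_zero_iff ε).2 hε))

theorem spernerModule_zero (hint : S.inf' hS id = ∅) : spernerModule S hS hne 0 = 0 :=
  le_antisymm (by simpa using spernerModule_le_two_pow_mul_sq S hS hne hint le_rfl zero_le_one)
    (spernerModule_nonneg S hS hne le_rfl zero_le_one)

theorem spernerModule_one (hcard : ∀ A ∈ S, 2 ≤ #A) : spernerModule S hS hne 1 = 1 :=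
  le_antisymm (spernerModule_le_one S hS hne zero_le_one le_rfl)
    (by simpa using one_sub_spernerModule_le_two_pow_mul_sq S hS hne hcard zero_le_one le_rfl)

end SpernerModule

open Set Filter Topology

theorem sperner_module_iterates_limit_general
    (n : ℕ) (S : Finset (Finset (Fin n))) (hS : S.Nonempty)
    (hne : ∀ A ∈ S, A.Nonempty)
    (hcard : ∀ A ∈ S, 2 ≤ A.card) (hint : S.inf' hS id = ∅)
    (ω : ℝ) (hω : ω ∈ Set.Ioo (0 : ℝ) 1) (hfix : spernerModule S hS hne ω = ω)
    (huniq : ∀ ω' ∈ Set.Ioo (0 : ℝ) 1, spernerModule S hS hne ω' = ω' → ω' = ω) :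
    (∀ t ∈ Set.Ico (0 : ℝ) ω,
      Filter.Tendsto (fun N => (spernerModule S hS hne)^[N] t) Filter.atTop (nhds 0)) ∧
    (∀ N : ℕ, (spernerModule S hS hne)^[N] ω = ω) ∧
    (∀ t ∈ Set.Ioc ω (1 : ℝ),
      Filter.Tendsto (fun N => (spernerModule S hS hne)^[N] t) Filter.atTop (nhds 1)) := by
  obtain ⟨hω₀, hω₁⟩ := hω
  set h := spernerModule S hS hne
  have hcont : Continuous h := continuous_spernerModule S hS hne
  have hbelow : ∀ x ∈ Ioo 0 ω, h x < x :=
    forall_lt_self_of_le_mul_sq hcont.continuousOn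
      (fun x hx hx' => hx.2.ne (huniq x ⟨hx.1, hx.2.trans hω₁⟩ hx'))
      (fun x hx => spernerModule_le_two_pow_mul_sq S hS hne hint hx.1.le (hx.2.trans hω₁).le)
  have habove : ∀ x ∈ Ioo ω 1, x < h x :=
    forall_self_lt_of_one_sub_le_mul_sq hcont.continuousOn
      (fun x hx hx' => hx.1.ne' (huniq x ⟨hω₀.trans hx.1, hx.2⟩ hx'))
      (fun x hx => one_sub_spernerModule_le_two_pow_mul_sq S hS hne hcard
        (hω₀.trans hx.1).le hx.2.le)
  refine ⟨fun t ht => ?_, Function.iterate_fixed hfix, fun t ht => ?_⟩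
  · exact tendsto_iterate_of_forall_lt_self hcont (spernerModule_zero S hS hne hint)
      (fun x hx => ⟨spernerModule_nonneg S hS hne hx.1.le (hx.2.trans hω₁).le, hbelow x hx⟩) ht
  · exact tendsto_iterate_of_forall_self_lt hcont (spernerModule_one S hS hne hcard)
      (fun x hx => ⟨habove x hx, spernerModule_le_one S hS hne (hω₀.trans hx.1).le hx.2.le⟩) ht

/-- Iteration of the module of a Sperner family (with at least two members, all of size
at least two and with empty common intersection) around its unique fixed point
`ω ∈ (0,1)`: the iterates tend to `0` below `ω`, fix `ω`, and tend to `1` above `ω`. -/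
theorem sperner_module_iterates_limit
    (n : ℕ) (hn : 1 ≤ n) (S : Finset (Finset (Fin n))) (hS : S.Nonempty)
    (hne : ∀ A ∈ S, A.Nonempty) (hsp : ∀ A ∈ S, ∀ B ∈ S, A ⊆ B → A = B)
    (hk : 2 ≤ S.card) (hcard : ∀ A ∈ S, 2 ≤ A.card) (hint : S.inf' hS id = ∅)
    (ω : ℝ) (hω : ω ∈ Set.Ioo (0 : ℝ) 1) (hfix : spernerModule S hS hne ω = ω)
    (huniq : ∀ ω' ∈ Set.Ioo (0 : ℝ) 1, spernerModule S hS hne ω' = ω' → ω' = ω) :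
    (∀ t ∈ Set.Ico (0 : ℝ) ω,
      Filter.Tendsto (fun N => (spernerModule S hS hne)^[N] t) Filter.atTop (nhds 0)) ∧
    (∀ N : ℕ, (spernerModule S hS hne)^[N] ω = ω) ∧
    (∀ t ∈ Set.Ioc ω (1 : ℝ),
      Filter.Tendsto (fun N => (spernerModule S hS hne)^[N] t) Filter.atTop (nhds 1)) :=
  sperner_module_iterates_limit_general n S hS hne hcard hint ω hω hfix huniq
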